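/- If a binary character χ on an n-element set X divides X into blocks of sizes r and n−r with 1 ≤ r ≤ n−1, then the probability that a uniformly random binary character on X is compatible with χ equals (1/2)^(r−1) + (1/2)^(n−r−1) − (1/2)^(n−2). -/

import Mathlib

/-!
A character `ψ` is determined by `ψ x0` and by `A(ψ) ⊆ X \ {x0}`, so the characters compatible
with `χ` are twice as many as the subsets `B ⊆ X \ {x0}` that are disjoint from, contained in, or
contain `A = A(χ)`. With `a = #A`, these three families have `2 ^ (n - 1 - a)`, `2 ^ a` and
`2 ^ (n - 1 - a)` members and overlap only in `∅` and `A`, so `2 * (2 ^ (n - a) + 2 ^ a - 2)`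
characters are compatible with `χ`. This is symmetric under `a ↦ n - a`, and `a` is `r` or `n - r`
according to the value `χ x0`.
-/

open Finset
open scoped Classical

/-- The set of taxa whose state differs from that of the reference taxon `x0`. -/
noncomputable def Aset {n : ℕ} (x0 : Fin n) (χ : Fin n → Bool) : Finset (Fin n) :=
  Finset.univ.filter fun x => χ x ≠ χ x0

/-- Two binary characters are compatible if their `Aset`s are disjoint or nested. -/
def Compat {n : ℕ} (x0 : Fin n) (χ₁ χ₂ : Fin n → Bool) : Prop :=
  Disjoint (Aset x0 χ₁) (Aset x0 χ₂) ∨ Aset x0 χ₁ ⊆ Aset x0 χ₂ ∨ Aset x0 χ₂ ⊆ Aset x0 χ₁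

namespace Finset

variable {α : Type*} [DecidableEq α] {A S : Finset α}

theorem filter_powerset_disjoint_left :
    {B ∈ S.powerset | Disjoint A B} = (S \ A).powerset := by
  ext B
  simp only [mem_filter, mem_powerset, subset_sdiff, disjoint_comm]

theorem filter_powerset_subset_of_subset (hAS : A ⊆ S) :
    {B ∈ S.powerset | B ⊆ A} = A.powerset := by
  ext B
  simp only [mem_filter, mem_powerset, and_iff_right_iff_imp]
  exact fun hBA => hBA.trans hAS

theorem filter_powerset_superset_and_subset (hAS : A ⊆ S) :
    {B ∈ S.powerset | A ⊆ B ∧ B ⊆ A} = {A} := by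
  ext B
  simp only [mem_filter, mem_powerset, mem_singleton]
  constructor
  · rintro ⟨-, hAB, hBA⟩
    exact Subset.antisymm hBA hAB
  · rintro rfl
    exact ⟨hAS, Subset.rfl, Subset.rfl⟩

theorem filter_powerset_disjoint_and_nested (hA : A.Nonempty) :
    {B ∈ S.powerset | Disjoint A B ∧ (A ⊆ B ∨ B ⊆ A)} = {∅} := by
  ext B
  simp only [mem_filter, mem_powerset, mem_singleton]
  constructor
  · rintro ⟨-, hdisj, hAB | hBA⟩
    · exact absurd ((disjoint_self_iff_empty A).1 (hdisj.mono_right hAB)) hA.ne_empty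
    · exact (disjoint_self_iff_empty B).1 (hdisj.symm.mono_right hBA)
  · rintro rfl
    simp

theorem card_filter_powerset_disjoint_or_nested (hAS : A ⊆ S) (hA : A.Nonempty) :
    #{B ∈ S.powerset | Disjoint A B ∨ A ⊆ B ∨ B ⊆ A} + 2 = 2 * 2 ^ #(S \ A) + 2 ^ #A := by
  have nested := card_union_add_card_inter {B ∈ S.powerset | A ⊆ B} {B ∈ S.powerset | B ⊆ A}
  have all := card_union_add_card_inter {B ∈ S.powerset | Disjoint A B}
    {B ∈ S.powerset | A ⊆ B ∨ B ⊆ A}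
  rw [← filter_or, ← filter_and, filter_powerset_superset_and_subset hAS,
    ← Icc_eq_filter_powerset, card_Icc_finset hAS, filter_powerset_subset_of_subset hAS,
    card_powerset, ← card_sdiff_of_subset hAS] at nested
  rw [← filter_or, ← filter_and, filter_powerset_disjoint_and_nested hA,
    filter_powerset_disjoint_left, card_powerset] at all
  simp only [card_singleton] at nested all
  omega

end Finset

theorem two_pow_add_two_pow_sub_four_div (k m : ℕ) :
    ((2 : ℝ) ^ (k + 2) + 2 ^ (m + 2) - 4) / 2 ^ (k + m + 2)
      = (1 / 2 : ℝ) ^ k + (1 / 2) ^ m - (1 / 2) ^ (k + m) := by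
  simp only [one_div, inv_pow]
  field_simp
  ring

section Characters

variable {n : ℕ} (x0 : Fin n)

theorem mem_Aset {χ : Fin n → Bool} {x : Fin n} : x ∈ Aset x0 χ ↔ χ x ≠ χ x0 := by
  simp [Aset]

theorem Aset_subset_erase (χ : Fin n → Bool) : Aset x0 χ ⊆ univ.erase x0 := fun x hx =>
  mem_erase.2 ⟨fun h => (mem_Aset x0).1 hx (h ▸ rfl), mem_univ x⟩

def charOfAset (b : Bool) (B : Finset (Fin n)) : Fin n → Bool := fun x => xor (decide (x ∈ B)) b

theorem Aset_charOfAset (b : Bool) {B : Finset (Fin n)} (hB : x0 ∉ B) :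
    Aset x0 (charOfAset b B) = B := by
  ext x
  by_cases hx : x ∈ B <;> simp [mem_Aset, charOfAset, hx, hB]

theorem charOfAset_Aset (χ : Fin n → Bool) : charOfAset (χ x0) (Aset x0 χ) = χ := by
  funext x
  simp only [charOfAset, mem_Aset]
  cases χ x <;> cases χ x0 <;> decide

theorem card_filter_Aset (P : Finset (Fin n) → Prop) [DecidablePred P] :
    #{ψ : Fin n → Bool | P (Aset x0 ψ)} = 2 * #{B ∈ (univ.erase x0).powerset | P B} := by
  rw [← Fintype.card_bool, ← card_univ, ← card_product]
  refine card_bij' (fun ψ _ => (ψ x0, Aset x0 ψ)) (fun p _ => charOfAset p.1 p.2) ?_ ?_ ?_ ?_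
  · intro ψ hψ
    simp_all [Aset_subset_erase]
  · rintro ⟨b, B⟩ hB
    simp only [mem_product, mem_filter, mem_powerset, subset_erase] at hB
    simpa [Aset_charOfAset x0 b hB.2.1.2] using hB.2.2
  · intro ψ _
    exact charOfAset_Aset x0 ψ
  · rintro ⟨b, B⟩ hB
    simp only [mem_product, mem_filter, mem_powerset, subset_erase] at hB
    simp [Aset_charOfAset x0 b hB.2.1.2, charOfAset, hB.2.1.2]

theorem card_Aset_eq_or (χ : Fin n → Bool) {r : ℕ} (hχ : #{x | χ x = true} = r) :
    #(Aset x0 χ) = r ∨ #(Aset x0 χ) = n - r := by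
  have hsplit := card_filter_add_card_filter_not (s := univ) (fun x => χ x = true)
  rw [card_univ, Fintype.card_fin] at hsplit
  cases h : χ x0
  · left
    simpa [Aset, h] using hχ
  · right
    simp only [Aset, h, ne_eq]
    omega

theorem card_filter_compat_add_four (χ : Fin n → Bool) (hA : (Aset x0 χ).Nonempty) :
    #{ψ | Compat x0 χ ψ} + 4
      = 2 ^ (#(univ.erase x0 \ Aset x0 χ) + 2) + 2 ^ (#(Aset x0 χ) + 1) := by
  have hcount := card_filter_powerset_disjoint_or_nested (Aset_subset_erase x0 χ) hA
  have hψ := card_filter_Aset x0 (fun B => Disjoint (Aset x0 χ) B ∨ Aset x0 χ ⊆ B ∨ B ⊆ Aset x0 χ)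
  unfold Compat
  rw [filter_congr_decidable, hψ, pow_succ, pow_succ, pow_succ]
  omega

theorem card_filter_compat_div_two_pow (χ : Fin n → Bool) (hA : (Aset x0 χ).Nonempty) :
    (#{ψ | Compat x0 χ ψ} : ℝ) / 2 ^ n = (1 / 2 : ℝ) ^ (#(Aset x0 χ) - 1)
      + (1 / 2) ^ (n - #(Aset x0 χ) - 1) - (1 / 2) ^ (n - 2) := by
  have hcount := card_filter_compat_add_four x0 χ hA
  have hsplit : #(univ.erase x0 \ Aset x0 χ) + #(Aset x0 χ) + 1 = n := by
    have hsub := Aset_subset_erase x0 χ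
    have hle := card_le_card hsub
    rw [card_sdiff_of_subset hsub]
    simp only [card_erase_of_mem (mem_univ x0), card_univ, Fintype.card_fin] at hle ⊢
    have := x0.pos
    omega
  obtain ⟨k, hk⟩ : ∃ k, #(Aset x0 χ) = k + 1 := ⟨_, (Nat.sub_add_cancel hA.card_pos).symm⟩
  set m := #(univ.erase x0 \ Aset x0 χ)
  rw [hk] at hcount
  have hN : (#{ψ | Compat x0 χ ψ} : ℝ) = 2 ^ (k + 2) + 2 ^ (m + 2) - 4 := by
    rw [eq_sub_iff_add_eq, add_comm (2 ^ (k + 2) : ℝ)]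
    exact_mod_cast hcount
  rw [hk, Nat.add_sub_cancel, show n - (k + 1) - 1 = m by omega, show n - 2 = k + m by omega,
    ← two_pow_add_two_pow_sub_four_div, hN, show k + m + 2 = n by omega]

end Characters

theorem stmt1_general (n r : ℕ) (hr : 1 ≤ r) (hr' : r ≤ n - 1)
    (x0 : Fin n) (χ : Fin n → Bool)
    (hχ : (Finset.univ.filter fun x => χ x = true).card = r) :
    ((Finset.univ.filter fun ψ : Fin n → Bool => Compat x0 χ ψ).card : ℝ) / 2 ^ n
      = (1 / 2 : ℝ) ^ (r - 1) + (1 / 2 : ℝ) ^ (n - r - 1) - (1 / 2 : ℝ) ^ (n - 2) := by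
  rcases card_Aset_eq_or x0 χ hχ with hA | hA
  · rw [card_filter_compat_div_two_pow x0 χ (card_pos.1 (by omega)), hA]
  · rw [card_filter_compat_div_two_pow x0 χ (card_pos.1 (by omega)), hA,
      add_comm ((1 / 2 : ℝ) ^ _)]
    congr 4
    omega

/-- If a binary character divides the n-set into blocks of sizes r and n-r (1 ≤ r ≤ n-1),
the probability that a uniformly random binary character is compatible with it equals
(1/2)^(r-1) + (1/2)^(n-r-1) - (1/2)^(n-2). -/
theorem stmt1 (n r : ℕ) (hn : 2 ≤ n) (hr : 1 ≤ r) (hr' : r ≤ n - 1)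
    (x0 : Fin n) (χ : Fin n → Bool)
    (hχ : (Finset.univ.filter fun x => χ x = true).card = r) :
    ((Finset.univ.filter fun ψ : Fin n → Bool => Compat x0 χ ψ).card : ℝ) / 2 ^ n
      = (1 / 2 : ℝ) ^ (r - 1) + (1 / 2 : ℝ) ^ (n - r - 1) - (1 / 2 : ℝ) ^ (n - 2) :=
  stmt1_general n r hr hr' x0 χ hχ
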